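/- arXiv:2508.13190 — 6 statements merged into one kernel-verified Lean document; each statement's English description precedes it below -/
import Mathlib

section
/- For a smooth function f, the WENO-JS smoothness indicator β_1 = (13/12)(f(x-Δx) - 2f(x) + f(x+Δx))^2 + (1/4)(f(x-Δx) - f(x+Δx))^2 satisfies β_1 = f'(x)^2 Δx^2 + O(Δx^4) as Δx → 0; in particular, if f'(x) ≠ 0 then β_1 = O(Δx^2) and β_1 / Δx^2 → f'(x)^2. -/
open Filter Topology Asymptotics

/-- Mean value iteration helper: if `u 0 = 0` and `|deriv u t| ≤ C * t ^ n` on `[0,1]`,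
then `|u h| ≤ C * h ^ (n+1)` on `[0,1]`. -/
lemma weno_aux_mvt {u : ℝ → ℝ} (hu : Differentiable ℝ u) {C : ℝ} (hC : 0 ≤ C) {n : ℕ}
    (h0 : u 0 = 0) (hd : ∀ t ∈ Set.Icc (0:ℝ) 1, |deriv u t| ≤ C * t ^ n) :
    ∀ h ∈ Set.Icc (0:ℝ) 1, |u h| ≤ C * h ^ (n + 1) := by
  intro h hh
  obtain ⟨hh0, hh1⟩ := hh
  have hsub : Set.Icc (0:ℝ) h ⊆ Set.Icc (0:ℝ) 1 :=
    Set.Icc_subset_Icc le_rfl hh1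
  have key := (convex_Icc (0:ℝ) h).norm_image_sub_le_of_norm_deriv_le
    (f := u) (C := C * h ^ n)
    (fun y _ => hu y)
    (fun y hy => by
      have hyb := hd y (hsub hy)
      have hmono : C * y ^ n ≤ C * h ^ n :=
        mul_le_mul_of_nonneg_left (pow_le_pow_left₀ hy.1 hy.2 n) hC
      simpa [Real.norm_eq_abs] using hyb.trans hmono)
    (Set.left_mem_Icc.mpr hh0) (Set.right_mem_Icc.mpr hh0)
  rw [h0, sub_zero, sub_zero, Real.norm_eq_abs, Real.norm_eq_abs] at key
  calc |u h| ≤ C * h ^ n * |h| := key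
    _ = C * h ^ (n + 1) := by rw [abs_of_nonneg hh0]; ring

set_option maxHeartbeats 1000000 in
theorem weno_js_beta1_asymptotics
    (f : ℝ → ℝ) (hf : ContDiff ℝ 4 f) (x : ℝ)
    (β₁ : ℝ → ℝ)
    (hβ : ∀ Δx, β₁ Δx = (13/12) * (f (x - Δx) - 2 * f x + f (x + Δx)) ^ 2
        + (1/4) * (f (x - Δx) - f (x + Δx)) ^ 2) :
    (fun Δx => β₁ Δx - (deriv f x) ^ 2 * Δx ^ 2) =O[𝓝[>] 0] (fun Δx => Δx ^ 4) ∧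
    (deriv f x ≠ 0 →
      ((fun Δx => β₁ Δx) =O[𝓝[>] 0] (fun Δx => Δx ^ 2) ∧
       Tendsto (fun Δx => β₁ Δx / Δx ^ 2) (𝓝[>] 0) (𝓝 ((deriv f x) ^ 2)))) := by
  set f1 := deriv f with hf1def
  set f2 := deriv f1 with hf2def
  set f3 := deriv f2 with hf3def
  have hcd1 : ContDiff ℝ 3 f1 := ((contDiff_succ_iff_deriv (n := 3)).mp (by exact_mod_cast hf)).2.2
  have hcd2 : ContDiff ℝ 2 f2 := ((contDiff_succ_iff_deriv (n := 2)).mp (by exact_mod_cast hcd1)).2.2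
  have hcd3 : ContDiff ℝ 1 f3 := ((contDiff_succ_iff_deriv (n := 1)).mp (by exact_mod_cast hcd2)).2.2
  have hdf : Differentiable ℝ f := hf.differentiable (by norm_num)
  have hdf1 : Differentiable ℝ f1 := hcd1.differentiable (by norm_num)
  have hdf2 : Differentiable ℝ f2 := hcd2.differentiable (by norm_num)
  set a := f1 x with hadef
  set D : ℝ → ℝ := fun h => f (x + h) - 2 * f x + f (x - h) with hDdef
  set g : ℝ → ℝ := fun h => f (x + h) - f (x - h) - 2 * a * h with hgdef
  have hplus : ∀ (u : ℝ → ℝ), Differentiable ℝ u → ∀ h : ℝ,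
      HasDerivAt (fun h : ℝ => u (x + h)) (deriv u (x + h)) h := by
    intro u hu h
    simpa [Function.comp_def] using (hu (x + h)).hasDerivAt.comp h ((hasDerivAt_id h).const_add x)
  have hminus : ∀ (u : ℝ → ℝ), Differentiable ℝ u → ∀ h : ℝ,
      HasDerivAt (fun h : ℝ => u (x - h)) (-(deriv u (x - h))) h := by
    intro u hu h
    have := (hu (x - h)).hasDerivAt.comp h (((hasDerivAt_id h).neg).const_add x)
    simpa [sub_eq_add_neg, mul_comm, Function.comp_def] using this
  have hD' : ∀ h, HasDerivAt D (f1 (x + h) - f1 (x - h)) h := by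
    intro h
    have h3 := ((hplus f hdf h).sub_const (2 * f x)).add (hminus f hdf h)
    rw [show f1 (x + h) - f1 (x - h) = deriv f (x + h) + -(deriv f (x - h)) by
      rw [hf1def]; ring]
    exact h3
  have hD'' : ∀ h, HasDerivAt (fun h => f1 (x + h) - f1 (x - h)) (f2 (x + h) + f2 (x - h)) h := by
    intro h
    have h3 := (hplus f1 hdf1 h).sub (hminus f1 hdf1 h)
    rw [show f2 (x + h) + f2 (x - h) = deriv f1 (x + h) - -(deriv f1 (x - h)) by
      rw [hf2def]; ring]
    exact h3
  have hg' : ∀ h, HasDerivAt g (f1 (x + h) + f1 (x - h) - 2 * a) h := by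
    intro h
    have h3 := ((hplus f hdf h).sub (hminus f hdf h)).sub
      ((hasDerivAt_id h).const_mul (2 * a))
    rw [show f1 (x + h) + f1 (x - h) - 2 * a
        = deriv f (x + h) - -(deriv f (x - h)) - 2 * a * 1 by rw [hf1def]; ring]
    exact h3
  have hg'' : ∀ h, HasDerivAt (fun h => f1 (x + h) + f1 (x - h) - 2 * a)
      (f2 (x + h) - f2 (x - h)) h := by
    intro h
    have h3 := ((hplus f1 hdf1 h).add (hminus f1 hdf1 h)).sub_const (2 * a)
    rw [show f2 (x + h) - f2 (x - h) = deriv f1 (x + h) + -(deriv f1 (x - h)) by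
      rw [hf2def]; ring]
    exact h3
  have hg''' : ∀ h, HasDerivAt (fun h => f2 (x + h) - f2 (x - h)) (f3 (x + h) + f3 (x - h)) h := by
    intro h
    have h3 := (hplus f2 hdf2 h).sub (hminus f2 hdf2 h)
    rw [show f3 (x + h) + f3 (x - h) = deriv f2 (x + h) - -(deriv f2 (x - h)) by
      rw [hf3def]; ring]
    exact h3
  -- bounds for f2, f3 on [x-1, x+1]
  obtain ⟨M2, hM2⟩ : ∃ M2, ∀ y ∈ Set.Icc (x - 1) (x + 1), ‖f2 y‖ ≤ M2 :=
    isCompact_Icc.exists_bound_of_continuousOn hcd2.continuous.continuousOn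
  obtain ⟨M3, hM3⟩ : ∃ M3, ∀ y ∈ Set.Icc (x - 1) (x + 1), ‖f3 y‖ ≤ M3 :=
    isCompact_Icc.exists_bound_of_continuousOn hcd3.continuous.continuousOn
  have hxmem : x ∈ Set.Icc (x - 1) (x + 1) := by constructor <;> linarith
  have hM2n : 0 ≤ M2 := le_trans (norm_nonneg _) (hM2 x hxmem)
  have hM3n : 0 ≤ M3 := le_trans (norm_nonneg _) (hM3 x hxmem)
  have hmem : ∀ h : ℝ, h ∈ Set.Icc (0:ℝ) 1 →
      x + h ∈ Set.Icc (x - 1) (x + 1) ∧ x - h ∈ Set.Icc (x - 1) (x + 1) := by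
    intro h hh
    obtain ⟨h0, h1⟩ := hh
    exact ⟨⟨by linarith, by linarith⟩, ⟨by linarith, by linarith⟩⟩
  have hDdiff : Differentiable ℝ D := fun h => (hD' h).differentiableAt
  have hD1diff : Differentiable ℝ (fun h => f1 (x + h) - f1 (x - h)) :=
    fun h => (hD'' h).differentiableAt
  have hgdiff : Differentiable ℝ g := fun h => (hg' h).differentiableAt
  have hg1diff : Differentiable ℝ (fun h => f1 (x + h) + f1 (x - h) - 2 * a) :=
    fun h => (hg'' h).differentiableAt
  have hg2diff : Differentiable ℝ (fun h => f2 (x + h) - f2 (x - h)) :=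
    fun h => (hg''' h).differentiableAt
  have hD1bound : ∀ h ∈ Set.Icc (0:ℝ) 1, |f1 (x + h) - f1 (x - h)| ≤ 2 * M2 * h ^ (0 + 1) := by
    refine weno_aux_mvt hD1diff (by linarith) (by simp) ?_
    intro t ht
    rw [(hD'' t).deriv]
    have h1 := hM2 _ (hmem t ht).1
    have h2 := hM2 _ (hmem t ht).2
    rw [Real.norm_eq_abs] at h1 h2
    calc |f2 (x + t) + f2 (x - t)| ≤ |f2 (x + t)| + |f2 (x - t)| := abs_add_le _ _
      _ ≤ 2 * M2 * t ^ 0 := by simp only [pow_zero, mul_one]; linarith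
  have hDbound : ∀ h ∈ Set.Icc (0:ℝ) 1, |D h| ≤ 2 * M2 * h ^ (1 + 1) := by
    refine weno_aux_mvt hDdiff (by linarith) ?_ ?_
    · show f (x + 0) - 2 * f x + f (x - 0) = 0
      rw [add_zero, sub_zero]; ring
    intro t ht
    rw [(hD' t).deriv]
    simpa using hD1bound t ht
  have hg2bound : ∀ h ∈ Set.Icc (0:ℝ) 1, |f2 (x + h) - f2 (x - h)| ≤ 2 * M3 * h ^ (0 + 1) := by
    refine weno_aux_mvt hg2diff (by linarith) (by simp) ?_
    intro t ht
    rw [(hg''' t).deriv]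
    have h1 := hM3 _ (hmem t ht).1
    have h2 := hM3 _ (hmem t ht).2
    rw [Real.norm_eq_abs] at h1 h2
    calc |f3 (x + t) + f3 (x - t)| ≤ |f3 (x + t)| + |f3 (x - t)| := abs_add_le _ _
      _ ≤ 2 * M3 * t ^ 0 := by simp only [pow_zero, mul_one]; linarith
  have hg1bound : ∀ h ∈ Set.Icc (0:ℝ) 1,
      |f1 (x + h) + f1 (x - h) - 2 * a| ≤ 2 * M3 * h ^ (1 + 1) := by
    refine weno_aux_mvt hg1diff (by linarith) ?_ ?_
    · show f1 (x + 0) + f1 (x - 0) - 2 * a = 0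
      rw [add_zero, sub_zero, hadef]; ring
    intro t ht
    rw [(hg'' t).deriv]
    simpa using hg2bound t ht
  have hgbound : ∀ h ∈ Set.Icc (0:ℝ) 1, |g h| ≤ 2 * M3 * h ^ (2 + 1) := by
    refine weno_aux_mvt hgdiff (by linarith) ?_ ?_
    · show f (x + 0) - f (x - 0) - 2 * a * 0 = 0
      rw [add_zero, sub_zero]; ring
    intro t ht
    rw [(hg' t).deriv]
    simpa using hg1bound t ht
  set C : ℝ := 13/3 * M2 ^ 2 + M3 ^ 2 + 2 * |a| * M3 with hCdef
  have hCn : 0 ≤ C := by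
    rw [hCdef]
    have := abs_nonneg a
    positivity
  have hmain : ∀ h ∈ Set.Ioc (0:ℝ) 1, |β₁ h - a ^ 2 * h ^ 2| ≤ C * h ^ 4 := by
    intro h hh
    have hh' : h ∈ Set.Icc (0:ℝ) 1 := ⟨hh.1.le, hh.2⟩
    have h0 : 0 < h := hh.1
    have h1 : h ≤ 1 := hh.2
    have hDle : |D h| ≤ 2 * M2 * h ^ 2 := by simpa using hDbound h hh'
    have hgle : |g h| ≤ 2 * M3 * h ^ 3 := by simpa using hgbound h hh'
    have hkey : β₁ h - a ^ 2 * h ^ 2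
        = 13/12 * (D h) ^ 2 + 1/4 * (g h) ^ 2 + a * h * g h := by
      rw [hβ h]; simp only [hDdef, hgdef]; ring
    rw [hkey]
    have e1 : |13/12 * (D h) ^ 2| ≤ 13/12 * (2 * M2 * h ^ 2) ^ 2 := by
      have hp : |D h| ^ 2 ≤ (2 * M2 * h ^ 2) ^ 2 :=
        pow_le_pow_left₀ (abs_nonneg _) hDle 2
      calc |13/12 * (D h) ^ 2| = 13/12 * |D h| ^ 2 := by
            rw [abs_mul, abs_pow]; norm_num
        _ ≤ 13/12 * (2 * M2 * h ^ 2) ^ 2 := by linarith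
    have e2 : |1/4 * (g h) ^ 2| ≤ 1/4 * (2 * M3 * h ^ 3) ^ 2 := by
      have hp : |g h| ^ 2 ≤ (2 * M3 * h ^ 3) ^ 2 :=
        pow_le_pow_left₀ (abs_nonneg _) hgle 2
      calc |1/4 * (g h) ^ 2| = 1/4 * |g h| ^ 2 := by
            rw [abs_mul, abs_pow]; norm_num
      _ ≤ 1/4 * (2 * M3 * h ^ 3) ^ 2 := by linarith
    have e3 : |a * h * g h| ≤ |a| * h * (2 * M3 * h ^ 3) := by
      calc |a * h * g h| = |a| * h * |g h| := by
            rw [abs_mul, abs_mul, abs_of_pos h0]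
        _ ≤ |a| * h * (2 * M3 * h ^ 3) := by
            apply mul_le_mul_of_nonneg_left hgle
            positivity
    have tri : |13/12 * (D h) ^ 2 + 1/4 * (g h) ^ 2 + a * h * g h|
        ≤ |13/12 * (D h) ^ 2| + |1/4 * (g h) ^ 2| + |a * h * g h| :=
      (abs_add_le _ _).trans (by gcongr; exact abs_add_le _ _)
    refine tri.trans ?_
    have expand : 13/12 * (2 * M2 * h ^ 2) ^ 2 + 1/4 * (2 * M3 * h ^ 3) ^ 2
        + |a| * h * (2 * M3 * h ^ 3)
        = (13/3 * M2 ^ 2 + M3 ^ 2 * h ^ 2 + 2 * |a| * M3) * h ^ 4 := by ring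
    have hle : (13/3 * M2 ^ 2 + M3 ^ 2 * h ^ 2 + 2 * |a| * M3) * h ^ 4 ≤ C * h ^ 4 := by
      rw [hCdef]
      have hh2 : h ^ 2 ≤ 1 := by nlinarith
      have hM3sq : M3 ^ 2 * h ^ 2 ≤ M3 ^ 2 := by nlinarith [sq_nonneg M3]
      have h4 : (0:ℝ) < h ^ 4 := pow_pos h0 4
      nlinarith
    linarith [e1, e2, e3, hle, expand]
  have hIoc : Set.Ioc (0:ℝ) 1 ∈ 𝓝[>] (0:ℝ) := Ioc_mem_nhdsGT_of_mem (by norm_num)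
  have part1 : (fun Δx => β₁ Δx - a ^ 2 * Δx ^ 2) =O[𝓝[>] 0] (fun Δx => Δx ^ 4) := by
    rw [isBigO_iff]
    refine ⟨C, ?_⟩
    filter_upwards [hIoc] with h hh
    rw [Real.norm_eq_abs, Real.norm_eq_abs, abs_pow, abs_of_pos hh.1]
    exact hmain h hh
  refine ⟨part1, fun ha => ?_⟩
  have h42 : (fun Δx : ℝ => Δx ^ 4) =O[𝓝[>] 0] (fun Δx => Δx ^ 2) := by
    rw [isBigO_iff]
    refine ⟨1, ?_⟩
    filter_upwards [hIoc] with h hh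
    rw [Real.norm_eq_abs, Real.norm_eq_abs, abs_pow, abs_pow, one_mul, abs_of_pos hh.1]
    have h0 := hh.1
    have h1 := hh.2
    have hh2 : h ^ 2 ≤ 1 := by nlinarith
    nlinarith [pow_pos h0 2, hh2]
  constructor
  · have h2 : (fun Δx : ℝ => a ^ 2 * Δx ^ 2) =O[𝓝[>] 0] (fun Δx : ℝ => Δx ^ 2) :=
      (isBigO_refl (fun Δx : ℝ => Δx ^ 2) _).const_mul_left _
    have := (part1.trans h42).add h2
    simpa using this
  · have hzero : Tendsto (fun Δx : ℝ => (β₁ Δx - a ^ 2 * Δx ^ 2) / Δx ^ 2) (𝓝[>] 0) (𝓝 0) := by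
      have hb : ∀ᶠ h in 𝓝[>] (0:ℝ), ‖(β₁ h - a ^ 2 * h ^ 2) / h ^ 2‖ ≤ C * h ^ 2 := by
        filter_upwards [hIoc] with h hh
        have h2pos : (0:ℝ) < h ^ 2 := pow_pos hh.1 2
        rw [norm_div, Real.norm_eq_abs, Real.norm_eq_abs, abs_of_pos h2pos,
          div_le_iff₀ h2pos]
        calc |β₁ h - a ^ 2 * h ^ 2| ≤ C * h ^ 4 := hmain h hh
          _ = C * h ^ 2 * h ^ 2 := by ring
      have hC2 : Tendsto (fun h : ℝ => C * h ^ 2) (𝓝[>] 0) (𝓝 0) := by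
        have : Tendsto (fun h : ℝ => C * h ^ 2) (𝓝 0) (𝓝 (C * 0 ^ 2)) :=
          (continuous_const.mul (continuous_pow 2)).tendsto 0
        simpa using this.mono_left nhdsWithin_le_nhds
      have := squeeze_zero_norm' hb hC2
      exact this
    have heq : ∀ᶠ h in 𝓝[>] (0:ℝ),
        (β₁ h - a ^ 2 * h ^ 2) / h ^ 2 + a ^ 2 = β₁ h / h ^ 2 := by
      filter_upwards [self_mem_nhdsWithin] with h (hh : 0 < h)
      have h2 : h ^ 2 ≠ 0 := by positivity
      field_simp
      ring
    have hsum := hzero.add (tendsto_const_nhds (x := a ^ 2))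
    rw [zero_add] at hsum
    exact Tendsto.congr' heq hsum
end

section
/- For a smooth function f, the global smoothness measure τ_5 = |β_2 - β_0| of the WENO-Z scheme satisfies τ_5 = O(Δx^5) as Δx → 0, where β_0 and β_2 are the left and right WENO-JS smoothness indicators on the five-point stencil centered at x. -/
/-- If `g 0 = 0` and `|g'| ≤ C * |t|^n` on `|t| ≤ δ`, then `|g t| ≤ C * |t|^(n+1)`. -/
lemma mvt_pow_bound (g g' : ℝ → ℝ) (hg : ∀ t, HasDerivAt g (g' t) t)
    (hg0 : g 0 = 0) (C δ : ℝ) (hC : 0 ≤ C) (n : ℕ)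
    (hb : ∀ t : ℝ, |t| ≤ δ → |g' t| ≤ C * |t| ^ n) :
    ∀ t : ℝ, |t| ≤ δ → |g t| ≤ C * |t| ^ (n + 1) := by
  intro t ht
  have key : ‖g t - g 0‖ ≤ (C * |t| ^ n) * ‖t - (0:ℝ)‖ := by
    apply Convex.norm_image_sub_le_of_norm_hasDerivWithin_le
      (s := Set.Icc (min 0 t) (max 0 t)) (f' := g')
    · intro y _; exact (hg y).hasDerivWithinAt
    · intro y hy
      have hyt : |y| ≤ |t| := by
        rcases hy with ⟨h1, h2⟩
        rcases abs_le.1 (le_refl |t|) with _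
        rw [abs_le]; constructor
        · have : -|t| ≤ min 0 t :=
            le_min (by simp [abs_nonneg]) (neg_abs_le t)
          linarith
        · have : max 0 t ≤ |t| := max_le (abs_nonneg t) (le_abs_self t)
          linarith
      calc |g' y| ≤ C * |y| ^ n := hb y (hyt.trans ht)
        _ ≤ C * |t| ^ n := by
            apply mul_le_mul_of_nonneg_left (pow_le_pow_left₀ (abs_nonneg _) hyt n) hC
    · exact convex_Icc _ _
    · exact ⟨min_le_left _ _, le_max_left _ _⟩
    · exact ⟨min_le_right _ _, le_max_right _ _⟩
  simpa [hg0, Real.norm_eq_abs, pow_succ, mul_assoc] using key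
lemma taylor_abs_bound (n : ℕ) : ∀ (g : ℝ → ℝ), ContDiff ℝ (n+1 : ℕ) g → ∀ x : ℝ,
    ∃ C δ : ℝ, 0 < δ ∧ 0 ≤ C ∧ ∀ t : ℝ, |t| ≤ δ →
      |g (x+t) - ∑ k ∈ Finset.range (n+1), iteratedDeriv k g x * t^k / (k.factorial : ℝ)|
        ≤ C * |t|^(n+1) := by
  induction n with
  | zero =>
    intro g hg x
    have hcont : Continuous (deriv g) := hg.continuous_deriv (by norm_num)
    obtain ⟨C, hC⟩ := (isCompact_Icc (a := x - 1) (b := x + 1)).exists_bound_of_continuousOn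
      hcont.continuousOn
    refine ⟨max C 0, 1, one_pos, le_max_right _ _, ?_⟩
    have hmvt := mvt_pow_bound (fun t => g (x+t) - g x) (fun t => deriv g (x+t))
      (fun t => by
        have h1 : HasDerivAt (fun t : ℝ => x + t) 1 t := by
          simpa using (hasDerivAt_id t).const_add x
        have h2 : HasDerivAt g (deriv g (x+t)) (x+t) :=
          ((hg.differentiable (by norm_num)) (x+t)).hasDerivAt
        simpa using (h2.comp t h1).sub_const (g x))
      (by simp) (max C 0) 1 (le_max_right _ _) 0
      (fun t ht => by
        have : x + t ∈ Set.Icc (x-1) (x+1) := by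
          constructor <;> [linarith [neg_abs_le t, abs_le.mp ht]; linarith [le_abs_self t, abs_le.mp ht]]
        simpa using le_trans (hC _ this) (le_max_left C 0))
    intro t ht
    have := hmvt t ht
    simpa [Finset.sum_range_succ] using this
  | succ n ih =>
    intro g hg x
    have hg' : ContDiff ℝ (n+1 : ℕ) (deriv g) := by
      have : ContDiff ℝ ((n+1 : ℕ) + 1) g := by exact_mod_cast hg
      exact (contDiff_succ_iff_deriv.mp this).2.2
    obtain ⟨C, δ, hδ, hCnn, hb⟩ := ih (deriv g) hg' x
    refine ⟨C, δ, hδ, hCnn, ?_⟩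
    set d : ℕ → ℝ := fun k => iteratedDeriv k g x with hd
    have hmvt := mvt_pow_bound
      (fun t => g (x+t) - ∑ k ∈ Finset.range (n+2), d k * t^k / (k.factorial : ℝ))
      (fun t => deriv g (x+t) - ∑ k ∈ Finset.range (n+1), d (k+1) * t^k / (k.factorial : ℝ))
      (fun t => by
        have h1 : HasDerivAt (fun t : ℝ => x + t) 1 t := by
          simpa using (hasDerivAt_id t).const_add x
        have h2 : HasDerivAt g (deriv g (x+t)) (x+t) :=
          ((hg.differentiable (by norm_num)) (x+t)).hasDerivAt
        have h3 : HasDerivAt (fun t : ℝ => g (x+t)) (deriv g (x+t)) t := by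
          have h3' := h2.comp t h1; rw [mul_one] at h3'; exact h3'
        have h4 : HasDerivAt (fun t : ℝ => ∑ k ∈ Finset.range (n+2), d k * t^k / (k.factorial : ℝ))
            (∑ k ∈ Finset.range (n+2), d k * ((k:ℝ) * t^(k-1)) / (k.factorial : ℝ)) t := by
          apply HasDerivAt.fun_sum
          intro k _
          exact ((hasDerivAt_pow k t).const_mul (d k)).div_const _
        have heq : (∑ k ∈ Finset.range (n+2), d k * ((k:ℝ) * t^(k-1)) / (k.factorial : ℝ))
            = ∑ k ∈ Finset.range (n+1), d (k+1) * t^k / (k.factorial : ℝ) := by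
          rw [Finset.sum_range_succ']
          simp only [Nat.cast_zero, zero_mul, mul_zero, zero_div, add_zero]
          apply Finset.sum_congr rfl
          intro k _
          have hfac : ((k+1).factorial : ℝ) = (k+1) * k.factorial := by
            push_cast [Nat.factorial_succ]; ring
          rw [hfac]
          have hk1 : ((k:ℝ)+1) ≠ 0 := by positivity
          have hkf : (k.factorial : ℝ) ≠ 0 := by positivity
          push_cast
          field_simp
        show HasDerivAt _ (deriv g (x+t) - ∑ k ∈ Finset.range (n+1), d (k+1) * t^k / (k.factorial : ℝ)) t
        rw [← heq]
        exact h3.sub h4)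
      (by
        simp [Finset.sum_range_succ', d])
      C δ hCnn (n+1)
      (fun t ht => by
        have h5 := hb t ht
        have hrw : ∀ k, iteratedDeriv k (deriv g) x = d (k+1) := by
          intro k; rw [hd]; simp [← iteratedDeriv_succ']
        simp only [hrw] at h5
        exact h5)
    intro t ht
    exact hmvt t ht

set_option maxHeartbeats 2000000 in
theorem weno_z_tau5_fifth_order
    (f : ℝ → ℝ) (hf : ContDiff ℝ 6 f) (x : ℝ) :
    ∃ C δ : ℝ, 0 < δ ∧ ∀ Δx : ℝ, 0 < Δx → Δx < δ →
      |((13/12) * (f x - 2 * f (x + Δx) + f (x + 2*Δx)) ^ 2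
          + (1/4) * (3 * f x - 4 * f (x + Δx) + f (x + 2*Δx)) ^ 2)
        - ((13/12) * (f (x - 2*Δx) - 2 * f (x - Δx) + f x) ^ 2
          + (1/4) * (f (x - 2*Δx) - 4 * f (x - Δx) + 3 * f x) ^ 2)|
      ≤ C * Δx ^ 5 := by
  obtain ⟨C₁, δ₁, hδ₁, hC₁, h1⟩ := taylor_abs_bound 0 f (hf.of_le (by norm_num)) x
  obtain ⟨C₂, δ₂, hδ₂, hC₂, h2⟩ := taylor_abs_bound 1 f (hf.of_le (by norm_num)) x
  obtain ⟨C₃, δ₃, hδ₃, hC₃, h3⟩ := taylor_abs_bound 2 f (hf.of_le (by norm_num)) x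
  obtain ⟨C₄, δ₄, hδ₄, hC₄, h4⟩ := taylor_abs_bound 3 f (hf.of_le (by norm_num)) x
  simp only [Finset.sum_range_succ, Finset.sum_range_zero, iteratedDeriv_zero,
    Nat.factorial] at h1 h2 h3 h4
  set d1 := iteratedDeriv 1 f x
  set d2 := iteratedDeriv 2 f x
  set d3 := iteratedDeriv 3 f x
  refine ⟨260*C₂*C₃ + 120*C₁*C₄, min (min δ₁ δ₂) (min δ₃ δ₄) / 2,
    by positivity, ?_⟩
  intro h hh hhδ
  have hδm : 2*h ≤ min (min δ₁ δ₂) (min δ₃ δ₄) := by linarith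
  have hle1 : h ≤ δ₁ := by simp only [le_min_iff] at hδm; linarith [hδm.1.1]
  have hle2 : h ≤ δ₂ := by simp only [le_min_iff] at hδm; linarith [hδm.1.2]
  have hle3 : h ≤ δ₃ := by simp only [le_min_iff] at hδm; linarith [hδm.2.1]
  have hle4 : h ≤ δ₄ := by simp only [le_min_iff] at hδm; linarith [hδm.2.2]
  have h2le1 : 2*h ≤ δ₁ := by simp only [le_min_iff] at hδm; linarith [hδm.1.1]
  have h2le2 : 2*h ≤ δ₂ := by simp only [le_min_iff] at hδm; linarith [hδm.1.2]
  have h2le3 : 2*h ≤ δ₃ := by simp only [le_min_iff] at hδm; linarith [hδm.2.1]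
  have h2le4 : 2*h ≤ δ₄ := by simp only [le_min_iff] at hδm; linarith [hδm.2.2]
  have habsh : |h| = h := abs_of_pos hh
  have habsnh : |(-h)| = h := by rw [abs_neg]; exact habsh
  have habs2h : |(2*h)| = 2*h := abs_of_pos (by linarith)
  have habsn2h : |(-(2*h))| = 2*h := by rw [abs_neg]; exact habs2h
  have hxm : x + -h = x - h := by ring
  have hxm2 : x + -(2*h) = x - 2*h := by ring
  -- instantiate remainder bounds
  have e1p := h1 h (by rw [habsh]; exact hle1)
  have e1m := h1 (-h) (by rw [habsnh]; exact hle1)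
  have e1p2 := h1 (2*h) (by rw [habs2h]; exact h2le1)
  have e1m2 := h1 (-(2*h)) (by rw [habsn2h]; exact h2le1)
  have e2p := h2 h (by rw [habsh]; exact hle2)
  have e2m := h2 (-h) (by rw [habsnh]; exact hle2)
  have e2p2 := h2 (2*h) (by rw [habs2h]; exact h2le2)
  have e2m2 := h2 (-(2*h)) (by rw [habsn2h]; exact h2le2)
  have e3p := h3 h (by rw [habsh]; exact hle3)
  have e3m := h3 (-h) (by rw [habsnh]; exact hle3)
  have e3p2 := h3 (2*h) (by rw [habs2h]; exact h2le3)
  have e3m2 := h3 (-(2*h)) (by rw [habsn2h]; exact h2le3)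
  have e4p := h4 h (by rw [habsh]; exact hle4)
  have e4m := h4 (-h) (by rw [habsnh]; exact hle4)
  have e4p2 := h4 (2*h) (by rw [habs2h]; exact h2le4)
  have e4m2 := h4 (-(2*h)) (by rw [habsn2h]; exact h2le4)
  rw [hxm, habsnh] at e1m e2m e3m e4m
  rw [hxm2, habsn2h] at e1m2 e2m2 e3m2 e4m2
  rw [habsh] at e1p e2p e3p e4p
  rw [habs2h] at e1p2 e2p2 e3p2 e4p2
  set A1 := f x - 2 * f (x + h) + f (x + 2*h) with hA1
  set A2 := f (x - 2*h) - 2 * f (x - h) + f x with hA2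
  set B1 := 3 * f x - 4 * f (x + h) + f (x + 2*h) with hB1
  set B2 := f (x - 2*h) - 4 * f (x - h) + 3 * f x with hB2
  -- bound the four factors
  have hDA : |A1 - A2| ≤ 20*C₃*h^3 := by
    have hrw : A1 - A2 =
        (f (x + 2*h) - (f x + d1*(2*h) + d2*(2*h)^2/2))
        - (f (x - 2*h) - (f x + d1*(-(2*h)) + d2*(-(2*h))^2/2))
        - 2*(f (x + h) - (f x + d1*h + d2*h^2/2))
        + 2*(f (x - h) - (f x + d1*(-h) + d2*(-h)^2/2)) := by
      rw [hA1, hA2]; ring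
    rw [hrw, abs_le]
    obtain ⟨a1, b1⟩ := abs_le.mp e3p
    obtain ⟨a2, b2⟩ := abs_le.mp e3m
    obtain ⟨a3, b3⟩ := abs_le.mp e3p2
    obtain ⟨a4, b4⟩ := abs_le.mp e3m2
    constructor <;> linarith
  have hSA : |A1 + A2| ≤ 12*C₂*h^2 := by
    have hrw : A1 + A2 =
        (f (x + 2*h) - (f x + d1*(2*h)))
        + (f (x - 2*h) - (f x + d1*(-(2*h))))
        - 2*(f (x + h) - (f x + d1*h))
        - 2*(f (x - h) - (f x + d1*(-h))) := by
      rw [hA1, hA2]; ring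
    rw [hrw, abs_le]
    obtain ⟨a1, b1⟩ := abs_le.mp e2p
    obtain ⟨a2, b2⟩ := abs_le.mp e2m
    obtain ⟨a3, b3⟩ := abs_le.mp e2p2
    obtain ⟨a4, b4⟩ := abs_le.mp e2m2
    constructor <;> linarith
  have hDB : |B1 - B2| ≤ 12*C₁*h := by
    have hrw : B1 - B2 =
        (f (x + 2*h) - f x) - (f (x - 2*h) - f x)
        - 4*(f (x + h) - f x) + 4*(f (x - h) - f x) := by
      rw [hB1, hB2]; ring
    rw [hrw, abs_le]
    obtain ⟨a1, b1⟩ := abs_le.mp e1p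
    obtain ⟨a2, b2⟩ := abs_le.mp e1m
    obtain ⟨a3, b3⟩ := abs_le.mp e1p2
    obtain ⟨a4, b4⟩ := abs_le.mp e1m2
    constructor <;> linarith
  have hSB : |B1 + B2| ≤ 40*C₄*h^4 := by
    have hrw : B1 + B2 =
        (f (x + 2*h) - (f x + d1*(2*h) + d2*(2*h)^2/2 + d3*(2*h)^3/6))
        + (f (x - 2*h) - (f x + d1*(-(2*h)) + d2*(-(2*h))^2/2 + d3*(-(2*h))^3/6))
        - 4*(f (x + h) - (f x + d1*h + d2*h^2/2 + d3*h^3/6))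
        - 4*(f (x - h) - (f x + d1*(-h) + d2*(-h)^2/2 + d3*(-h)^3/6)) := by
      rw [hB1, hB2]; ring
    rw [hrw, abs_le]
    obtain ⟨a1, b1⟩ := abs_le.mp e4p
    obtain ⟨a2, b2⟩ := abs_le.mp e4m
    obtain ⟨a3, b3⟩ := abs_le.mp e4p2
    obtain ⟨a4, b4⟩ := abs_le.mp e4m2
    constructor <;> linarith
  -- combine
  have key : ((13/12) * A1 ^ 2 + (1/4) * B1 ^ 2) - ((13/12) * A2 ^ 2 + (1/4) * B2 ^ 2)
      = (13/12)*((A1 - A2)*(A1 + A2)) + (1/4)*((B1 - B2)*(B1 + B2)) := by ring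
  calc |((13/12) * A1 ^ 2 + (1/4) * B1 ^ 2) - ((13/12) * A2 ^ 2 + (1/4) * B2 ^ 2)|
      ≤ (13/12)*(|A1 - A2| * |A1 + A2|) + (1/4)*(|B1 - B2| * |B1 + B2|) := by
        rw [key]
        refine le_trans (abs_add_le _ _) ?_
        rw [abs_mul, abs_mul, abs_mul, abs_mul]
        norm_num [abs_of_pos]
    _ ≤ (13/12)*((20*C₃*h^3)*(12*C₂*h^2)) + (1/4)*((12*C₁*h)*(40*C₄*h^4)) := by
        gcongr
    _ = (260*C₂*C₃ + 120*C₁*C₄) * h ^ 5 := by ring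
end

section
/- If in the WENO-Z weights τ_5 = O(Δx^5) and β_k = D Δx^2(1 + O(Δx)) with D > 0, then with α_k = d_k (1 + τ_5/β_k) and w_k = α_k / Σ_l α_l, the weights satisfy w_k = d_k + O(Δx^3). -/
theorem weno_z_weights_third_order_convergence
    (d : Fin 3 → ℝ) (hd : ∀ k, 0 < d k) (hsum : d 0 + d 1 + d 2 = 1)
    (D C : ℝ) (hD : 0 < D) (hC : 0 < C)
    (τ : ℝ → ℝ) (hτ0 : ∀ Δx, 0 < Δx → 0 ≤ τ Δx)
    (hτ : ∀ Δx, 0 < Δx → τ Δx ≤ C * Δx ^ 5)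
    (e : ℝ → Fin 3 → ℝ) (he : ∀ Δx k, 0 < Δx → |e Δx k| ≤ C * Δx)
    (β : ℝ → Fin 3 → ℝ)
    (hβ : ∀ Δx k, β Δx k = D * Δx ^ 2 * (1 + e Δx k))
    (α : ℝ → Fin 3 → ℝ)
    (hα : ∀ Δx k, α Δx k = d k * (1 + τ Δx / β Δx k))
    (w : ℝ → Fin 3 → ℝ)
    (hw : ∀ Δx k, w Δx k = α Δx k / (α Δx 0 + α Δx 1 + α Δx 2)) :
    ∃ C' δ : ℝ, 0 < δ ∧ ∀ Δx : ℝ, 0 < Δx → Δx < δ → ∀ k,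
      |w Δx k - d k| ≤ C' * Δx ^ 3 := by
  set M : ℝ := 2 * C / D with hMdef
  have hM : 0 < M := by positivity
  have hMD : M * D = 2 * C := by rw [hMdef, div_mul_cancel₀ _ hD.ne']
  refine ⟨M, 1 / (2 * C), by positivity, ?_⟩
  intro x hx hxδ k
  have hx3 : 0 < x ^ 3 := by positivity
  have hCx : C * x ≤ 1 / 2 := by
    rw [lt_div_iff₀ (by positivity)] at hxδ
    nlinarith
  -- β bounds
  have hβlb : ∀ j, D * x ^ 2 / 2 ≤ β x j := by
    intro j
    have h := abs_le.mp (he x j hx)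
    rw [hβ]
    nlinarith [mul_nonneg (mul_pos hD (pow_pos hx 2)).le
      (show (0:ℝ) ≤ 1/2 + e x j by linarith [h.1])]
  have hβpos : ∀ j, 0 < β x j := fun j =>
    lt_of_lt_of_le (by positivity) (hβlb j)
  have hr0 : ∀ j, 0 ≤ τ x / β x j := fun j =>
    div_nonneg (hτ0 x hx) (hβpos j).le
  have hr1 : ∀ j, τ x / β x j ≤ M * x ^ 3 := by
    intro j
    rw [div_le_iff₀ (hβpos j)]
    have h1 := hβlb j
    have h2 := hτ x hx
    have h3 := mul_le_mul_of_nonneg_left h1 (by positivity : (0:ℝ) ≤ M * x ^ 3)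
    have h4 : M * x ^ 3 * (D * x ^ 2 / 2) = C * x ^ 5 := by
      have : M * x ^ 3 * (D * x ^ 2 / 2) = M * D * x ^ 5 / 2 := by ring
      rw [this, hMD]; ring
    linarith
  set S : ℝ := α x 0 + α x 1 + α x 2 with hSdef
  have hd0 := hd 0; have hd1 := hd 1; have hd2 := hd 2
  have hS1 : 1 ≤ S := by
    rw [hSdef, hα, hα, hα]
    nlinarith [hr0 0, hr0 1, hr0 2]
  have hS2 : S ≤ 1 + M * x ^ 3 := by
    rw [hSdef, hα, hα, hα]
    nlinarith [hr1 0, hr1 1, hr1 2, hr0 0, hr0 1, hr0 2]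
  have hSpos : 0 < S := lt_of_lt_of_le one_pos hS1
  have hdk1 : d k ≤ 1 := by
    fin_cases k
    · show d 0 ≤ 1; linarith
    · show d 1 ≤ 1; linarith
    · show d 2 ≤ 1; linarith
  have hdk := hd k
  have key : |α x k - d k * S| ≤ M * x ^ 3 := by
    have hrk0 := hr0 k
    have hrk1 := hr1 k
    rw [hα, abs_le]
    constructor <;> nlinarith
  rw [hw]
  have heq : α x k / S - d k = (α x k - d k * S) / S := by
    field_simp
  rw [heq, abs_div, abs_of_pos hSpos, div_le_iff₀ hSpos]
  nlinarith [abs_nonneg (α x k - d k * S)]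
end

section
/- (Harten's lemma, one-sided version.) Consider a scheme u_i^{n+1} = u_i^n + C_{i+1/2}(u_{i+1}^n - u_i^n) - D_{i-1/2}(u_i^n - u_{i-1}^n) on a periodic grid, where the coefficients (which may depend on the data) satisfy C_{i+1/2} ≥ 0, D_{i+1/2} ≥ 0, and C_{i+1/2} + D_{i+1/2} ≤ 1 for all i. Then TV(u^{n+1}) ≤ TV(u^n). -/
/-!
Write `Δ` for the forward difference. The scheme turns the new increment `Δu'ᵢ` into a combination
of the old increments `Δuᵢ`, `Δuᵢ₊₁`, `Δuᵢ₋₁` with the nonnegative weights `1 - Cᵢ - Dᵢ`, `Cᵢ₊₁`,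
`Dᵢ₋₁`. Bounding `|Δu'ᵢ|` by the triangle inequality and summing over the periodic grid, each old
increment `|Δuⱼ|` collects the total weight `(1 - Cⱼ - Dⱼ) + Cⱼ + Dⱼ = 1`.
-/

open scoped fwdDiff

namespace Harten

variable {G : Type*} [AddCommGroup G] (a : G) {u u' C D : G → ℝ}

theorem fwdDiff_eq_of_step
    (hu' : ∀ i, u' i = u i + C i * Δ_[a] u i - D (i - a) * Δ_[a] u (i - a)) (i : G) :
    Δ_[a] u' i = (1 - C i - D i) * Δ_[a] u i + C (i + a) * Δ_[a] u (i + a)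
      + D (i - a) * Δ_[a] u (i - a) := by
  simp only [fwdDiff, hu', add_sub_cancel_right, sub_add_cancel]
  ring

theorem abs_fwdDiff_le_of_step (hC : ∀ i, 0 ≤ C i) (hD : ∀ i, 0 ≤ D i)
    (hCD : ∀ i, C i + D i ≤ 1)
    (hu' : ∀ i, u' i = u i + C i * Δ_[a] u i - D (i - a) * Δ_[a] u (i - a)) (i : G) :
    |Δ_[a] u' i| ≤ (1 - C i - D i) * |Δ_[a] u i| + C (i + a) * |Δ_[a] u (i + a)|
      + D (i - a) * |Δ_[a] u (i - a)| := by
  have hw : 0 ≤ 1 - C i - D i := by linarith [hCD i]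
  rw [fwdDiff_eq_of_step a hu' i]
  calc _ ≤ |(1 - C i - D i) * Δ_[a] u i| + |C (i + a) * Δ_[a] u (i + a)|
        + |D (i - a) * Δ_[a] u (i - a)| := abs_add_three _ _ _
    _ = _ := by
      rw [abs_mul, abs_mul, abs_mul, abs_of_nonneg hw, abs_of_nonneg (hC _), abs_of_nonneg (hD _)]

theorem sum_abs_fwdDiff_le_of_step [Fintype G] (hC : ∀ i, 0 ≤ C i) (hD : ∀ i, 0 ≤ D i)
    (hCD : ∀ i, C i + D i ≤ 1)
    (hu' : ∀ i, u' i = u i + C i * Δ_[a] u i - D (i - a) * Δ_[a] u (i - a)) :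
    ∑ i, |Δ_[a] u' i| ≤ ∑ i, |Δ_[a] u i| := by
  set v : G → ℝ := fun i ↦ |Δ_[a] u i|
  have shift_right : ∑ i, C (i + a) * v (i + a) = ∑ i, C i * v i :=
    Equiv.sum_comp (Equiv.addRight a) fun i ↦ C i * v i
  have shift_left : ∑ i, D (i - a) * v (i - a) = ∑ i, D i * v i :=
    Equiv.sum_comp (Equiv.subRight a) fun i ↦ D i * v i
  calc ∑ i, |Δ_[a] u' i|
      ≤ ∑ i, ((1 - C i - D i) * v i + C (i + a) * v (i + a) + D (i - a) * v (i - a)) :=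
        Finset.sum_le_sum fun i _ ↦ abs_fwdDiff_le_of_step a hC hD hCD hu' i
    _ = ∑ i, ((1 - C i - D i) * v i + C i * v i + D i * v i) := by
        simp only [Finset.sum_add_distrib, shift_right, shift_left]
    _ = ∑ i, v i := Finset.sum_congr rfl fun i _ ↦ by ring

end Harten

theorem harten_lemma_tvd
    (N : ℕ) [NeZero N] (u u' C D : ZMod N → ℝ)
    (hC : ∀ i, 0 ≤ C i) (hD : ∀ i, 0 ≤ D i)
    (hCD : ∀ i, C i + D i ≤ 1)
    (hu' : ∀ i, u' i = u i + C i * (u (i + 1) - u i) - D (i - 1) * (u i - u (i - 1))) :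
    ∑ i : ZMod N, |u' (i + 1) - u' i| ≤ ∑ i : ZMod N, |u (i + 1) - u i| := by
  have hu'_fwdDiff : ∀ i, u' i = u i + C i * Δ_[1] u i - D (i - 1) * Δ_[1] u (i - 1) := by
    simpa only [fwdDiff, sub_add_cancel] using hu'
  exact Harten.sum_abs_fwdDiff_le_of_step 1 hC hD hCD hu'_fwdDiff
end

section
/- (Exactness of the fifth-order flux formula on polynomials.) For any polynomial f of degree at most 4 and any x, Δx with Δx > 0, the sliding-average identity holds exactly: f(x) = (1/Δx) ∫_{x-Δx/2}^{x+Δx/2} h(ξ) dξ where h is defined by h = (the unique polynomial of degree ≤ 4 satisfying this relation), and the UP5 reconstruction (2h-values replaced by f-values) satisfies (2f(x-2Δx) - 13f(x-Δx) + 47f(x) + 27f(x+Δx) - 3f(x+2Δx))/60 = h(x + Δx/2). -/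
set_option maxHeartbeats 1000000 in
theorem up5_exact_on_polynomials
    (f h : Polynomial ℝ) (hf : f.degree ≤ 4) (hh : h.degree ≤ 4)
    (Δx : ℝ) (hΔx : 0 < Δx)
    (havg : ∀ x : ℝ, f.eval x
      = (1 / Δx) * ∫ ξ in (x - Δx/2)..(x + Δx/2), h.eval ξ) :
    ∀ x : ℝ,
      (2 * f.eval (x - 2*Δx) - 13 * f.eval (x - Δx) + 47 * f.eval x
        + 27 * f.eval (x + Δx) - 3 * f.eval (x + 2*Δx)) / 60
      = h.eval (x + Δx/2) := by
  intro x
  set c0 := h.coeff 0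
  set c1 := h.coeff 1
  set c2 := h.coeff 2
  set c3 := h.coeff 3
  set c4 := h.coeff 4
  have hnd : h.natDegree < 5 :=
    Nat.lt_succ_of_le (Polynomial.natDegree_le_iff_degree_le.mpr hh)
  have hev : ∀ ξ : ℝ, h.eval ξ = c0 + c1*ξ + c2*ξ^2 + c3*ξ^3 + c4*ξ^4 := by
    intro ξ
    rw [Polynomial.eval_eq_sum_range' hnd]
    simp [Finset.sum_range_succ]
    rfl
  have key : ∀ a b : ℝ, (∫ ξ in a..b, h.eval ξ)
      = (c0*b + c1/2*b^2 + c2/3*b^3 + c3/4*b^4 + c4/5*b^5)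
        - (c0*a + c1/2*a^2 + c2/3*a^3 + c3/4*a^4 + c4/5*a^5) := by
    intro a b
    apply intervalIntegral.integral_eq_sub_of_hasDerivAt
    · intro t ht
      rw [hev t]
      have h1 : HasDerivAt (fun t : ℝ => t) 1 t := hasDerivAt_id t
      have H := ((((h1.const_mul c0).add
          ((hasDerivAt_pow 2 t).const_mul (c1/2))).add
          ((hasDerivAt_pow 3 t).const_mul (c2/3))).add
          ((hasDerivAt_pow 4 t).const_mul (c3/4))).add
          ((hasDerivAt_pow 5 t).const_mul (c4/5))
      convert H using 1
      · funext y; simp only [Pi.add_apply]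
      push_cast
      ring
    · apply Continuous.intervalIntegrable
      exact h.continuous
  have hf' : ∀ y : ℝ, f.eval y
      = (1 / Δx) * ((c0*(y + Δx/2) + c1/2*(y + Δx/2)^2 + c2/3*(y + Δx/2)^3
          + c3/4*(y + Δx/2)^4 + c4/5*(y + Δx/2)^5)
        - (c0*(y - Δx/2) + c1/2*(y - Δx/2)^2 + c2/3*(y - Δx/2)^3
          + c3/4*(y - Δx/2)^4 + c4/5*(y - Δx/2)^5)) := by
    intro y
    rw [havg y, key]
  rw [hf', hf', hf', hf', hf', hev]
  field_simp
  ring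
end

section
/- (Shock stencil suppression.) Fix d_k > 0 summing to 1, p ≥ 1 integer, ε > 0. Suppose β_0 ≥ M while β_1, β_2 ≤ m with 0 ≤ m < M. Then the WENO-JS weight satisfies w_0 ≤ (d_0/(M+ε)^p)/(d_0/(M+ε)^p + (d_1+d_2)/(m+ε)^p); in particular, if β_1, β_2 = O(Δx^2) and β_0 ≥ c > 0 as Δx → 0 (with ε fixed small), then w_0 = O(Δx^{2p}). -/
private lemma frac_mono (a a' b b' : ℝ) (ha : 0 < a) (ha' : 0 < a')
    (hb : 0 < b) (hb' : 0 < b') (h1 : a ≤ a') (h2 : b' ≤ b) :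
    a / (a + b) ≤ a' / (a' + b') := by
  rw [div_le_div_iff₀ (by linarith) (by linarith)]
  nlinarith

theorem shock_stencil_suppression
    (d : Fin 3 → ℝ) (hd : ∀ k, 0 < d k) (hsum : d 0 + d 1 + d 2 = 1)
    (p : ℕ) (hp : 1 ≤ p) :
    (∀ ε M m : ℝ, ∀ β : Fin 3 → ℝ, 0 < ε → 0 ≤ m → m < M →
      M ≤ β 0 → β 1 ≤ m → β 2 ≤ m → (∀ k, 0 ≤ β k) →
      (d 0 / (β 0 + ε) ^ p) /
          ((d 0 / (β 0 + ε) ^ p) + (d 1 / (β 1 + ε) ^ p) + (d 2 / (β 2 + ε) ^ p))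
        ≤ (d 0 / (M + ε) ^ p) /
            (d 0 / (M + ε) ^ p + (d 1 + d 2) / (m + ε) ^ p)) ∧
    (∀ c C : ℝ, 0 < c → 0 < C →
      ∀ β : ℝ → Fin 3 → ℝ, ∀ ε : ℝ → ℝ,
      (∀ Δx, 0 < Δx → (∀ k, 0 ≤ β Δx k) ∧ c ≤ β Δx 0 ∧
        β Δx 1 ≤ C * Δx ^ 2 ∧ β Δx 2 ≤ C * Δx ^ 2 ∧
        0 < ε Δx ∧ ε Δx ≤ Δx ^ 2) →
      ∃ C' δ : ℝ, 0 < δ ∧ ∀ Δx : ℝ, 0 < Δx → Δx < δ →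
        (d 0 / (β Δx 0 + ε Δx) ^ p) /
            ((d 0 / (β Δx 0 + ε Δx) ^ p) + (d 1 / (β Δx 1 + ε Δx) ^ p)
              + (d 2 / (β Δx 2 + ε Δx) ^ p))
          ≤ C' * Δx ^ (2 * p)) := by
  constructor
  · intro ε M m β hε hm hmM hβ0 hβ1 hβ2 hβnn
    have h0 : (0:ℝ) < β 0 + ε := by have := hβnn 0; linarith
    have h1 : (0:ℝ) < β 1 + ε := by have := hβnn 1; linarith
    have h2 : (0:ℝ) < β 2 + ε := by have := hβnn 2; linarith
    have hMε : (0:ℝ) < M + ε := by linarith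
    have hmε : (0:ℝ) < m + ε := by linarith
    have hA : d 0 / (β 0 + ε) ^ p ≤ d 0 / (M + ε) ^ p := by
      gcongr
      exact (hd _).le
    have hB1 : d 1 / (m + ε) ^ p ≤ d 1 / (β 1 + ε) ^ p := by
      gcongr
      exact (hd _).le
    have hB2 : d 2 / (m + ε) ^ p ≤ d 2 / (β 2 + ε) ^ p := by
      gcongr
      exact (hd _).le
    have hB' : (d 1 + d 2) / (m + ε) ^ p
        ≤ d 1 / (β 1 + ε) ^ p + d 2 / (β 2 + ε) ^ p := by
      rw [add_div]; linarith
    have key := frac_mono (d 0 / (β 0 + ε) ^ p)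
      (d 0 / (M + ε) ^ p)
      (d 1 / (β 1 + ε) ^ p + d 2 / (β 2 + ε) ^ p)
      ((d 1 + d 2) / (m + ε) ^ p)
      (div_pos (hd 0) (pow_pos h0 p)) (div_pos (hd 0) (pow_pos hMε p))
      (add_pos (div_pos (hd 1) (pow_pos h1 p)) (div_pos (hd 2) (pow_pos h2 p)))
      (div_pos (by have := hd 1; have := hd 2; linarith) (pow_pos hmε p)) hA hB'
    calc (d 0 / (β 0 + ε) ^ p) /
          ((d 0 / (β 0 + ε) ^ p) + (d 1 / (β 1 + ε) ^ p) + (d 2 / (β 2 + ε) ^ p))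
        = (d 0 / (β 0 + ε) ^ p) /
          ((d 0 / (β 0 + ε) ^ p) + ((d 1 / (β 1 + ε) ^ p) + (d 2 / (β 2 + ε) ^ p))) := by
          ring_nf
      _ ≤ _ := key
  · intro c C hc hC β ε hβ
    refine ⟨d 0 * (C + 1) ^ p / (d 1 * c ^ p), 1, one_pos, ?_⟩
    intro Δx hΔx _
    obtain ⟨hnn, h0, h1, _h2, hεpos, hεle⟩ := hβ Δx hΔx
    set x := β Δx 0 + ε Δx with hxdef
    set y := β Δx 1 + ε Δx with hydef
    set z := β Δx 2 + ε Δx with hzdef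
    have hx : c ≤ x := by simp only [hxdef]; linarith
    have hxpos : 0 < x := lt_of_lt_of_le hc hx
    have hypos : 0 < y := by have := hnn 1; simp only [hydef]; linarith
    have hzpos : 0 < z := by have := hnn 2; simp only [hzdef]; linarith
    have hyle : y ≤ (C + 1) * Δx ^ 2 := by simp only [hydef]; nlinarith
    have hw2 : (0:ℝ) < (C + 1) * Δx ^ 2 := by positivity
    have hApos : 0 < d 0 / x ^ p := div_pos (hd 0) (pow_pos hxpos p)
    have hBpos : 0 < d 1 / y ^ p := div_pos (hd 1) (pow_pos hypos p)
    have hCpos : 0 < d 2 / z ^ p := div_pos (hd 2) (pow_pos hzpos p)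
    have hA : d 0 / x ^ p ≤ d 0 / c ^ p := by
      gcongr
      exact (hd _).le
    have hB : d 1 / ((C + 1) * Δx ^ 2) ^ p ≤ d 1 / y ^ p := by
      gcongr
      exact (hd _).le
    have hBpos' : 0 < d 1 / ((C + 1) * Δx ^ 2) ^ p := div_pos (hd 1) (pow_pos hw2 p)
    have step1 : (d 0 / x ^ p) / (d 0 / x ^ p + d 1 / y ^ p + d 2 / z ^ p)
        ≤ (d 0 / x ^ p) / (d 1 / y ^ p) :=
      div_le_div_of_nonneg_left hApos.le hBpos (by linarith)
    have step2 : (d 0 / x ^ p) / (d 1 / y ^ p)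
        ≤ (d 0 / c ^ p) / (d 1 / ((C + 1) * Δx ^ 2) ^ p) :=
      div_le_div₀ (le_of_lt (div_pos (hd 0) (pow_pos hc p))) hA hBpos' hB
    have step3 : (d 0 / c ^ p) / (d 1 / ((C + 1) * Δx ^ 2) ^ p)
        = d 0 * (C + 1) ^ p / (d 1 * c ^ p) * Δx ^ (2 * p) := by
      rw [pow_mul, mul_pow]
      have hc' : c ^ p ≠ 0 := ne_of_gt (pow_pos hc p)
      have hd1' : d 1 ≠ 0 := ne_of_gt (hd 1)
      have hC1 : ((C:ℝ) + 1) ^ p ≠ 0 := ne_of_gt (pow_pos (by linarith) p)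
      have hΔ : (Δx ^ 2) ^ p ≠ 0 := ne_of_gt (pow_pos (by positivity) p)
      field_simp
    calc (d 0 / x ^ p) / (d 0 / x ^ p + d 1 / y ^ p + d 2 / z ^ p)
        ≤ (d 0 / x ^ p) / (d 1 / y ^ p) := step1
      _ ≤ (d 0 / c ^ p) / (d 1 / ((C + 1) * Δx ^ 2) ^ p) := step2
      _ = _ := step3
end
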